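/- arXiv:0709.1270 — 2 statements merged into one kernel-verified Lean document; each statement's English description precedes it below -/
import Mathlib

section
/- For every n ≥ 1, the n-th recursively defined fragment graph on the (2^n−1)×(2^n−1) grid is a tree (connected and acyclic) spanning all (2^n−1)^2 vertices. -/
/-- Translation of the plane `ℤ²`. -/
def trP (t p : ℤ × ℤ) : ℤ × ℤ := (p.1 + t.1, p.2 + t.2)

/-- Vertical reflection inside a block of height `m` (`y ↦ m - 1 - y`):
used to turn two of the four copies upside down. -/
def reflP (m : ℤ) (p : ℤ × ℤ) : ℤ × ℤ := (p.1, m - 1 - p.2)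

/-- The edge set of the `n`-th fragment, a subgraph of the grid `ℤ²` living on
the square `[0, 2^n-2] × [0, 2^n-2]`.  The first fragment is a single vertex
with no edges; the `(n+1)`-th fragment consists of four copies of the `n`-th
fragment placed in the four quadrants (the two top ones turned upside down),
joined to the full central row and column by one connecting edge per copy. -/
def fragEdges : ℕ → Set (Sym2 (ℤ × ℤ))
  | 0 => ∅
  | 1 => ∅
  | (n + 2) =>
      let m : ℤ := 2 ^ (n + 1) - 1
      (Sym2.map (trP (0, 0)) '' fragEdges (n + 1)) ∪
      (Sym2.map (trP (m + 1, 0)) '' fragEdges (n + 1)) ∪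
      (Sym2.map (fun p => trP (0, m + 1) (reflP m p)) '' fragEdges (n + 1)) ∪
      (Sym2.map (fun p => trP (m + 1, m + 1) (reflP m p)) '' fragEdges (n + 1)) ∪
      {e | ∃ x : ℤ, 0 ≤ x ∧ x < 2 * m ∧ e = s((x, m), (x + 1, m))} ∪
      {e | ∃ y : ℤ, 0 ≤ y ∧ y < 2 * m ∧ e = s((m, y), (m, y + 1))} ∪
      {s((m - 1, m - 1), (m - 1, m)), s((m + 1, m - 1), (m + 1, m)),
       s((m - 1, m + 1), (m - 1, m)), s((m + 1, m + 1), (m + 1, m))}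

/-- The vertex set of the `n`-th fragment: the `(2^n-1) × (2^n-1)` grid square. -/
def fragVerts (n : ℕ) : Set (ℤ × ℤ) :=
  {p | 0 ≤ p.1 ∧ p.1 < 2 ^ n - 1 ∧ 0 ≤ p.2 ∧ p.2 < 2 ^ n - 1}

/-!
The `(n+2)`-th fragment is built up piece by piece, each new piece being a tree that meets the
union of the previous ones in exactly one vertex: first the central row and column (two paths
crossing at the centre), then alternately a connector edge and the copy of the `(n+1)`-th fragment
at its far end; the copies are images of that fragment under bijections of `ℤ²`. Gluing two trees
at a single common vertex gives a tree: collapsing one of them onto the common vertex retracts the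
union onto the other, so every edge remains a bridge.
-/

open SimpleGraph Function Set

namespace SimpleGraph

theorem Reachable.lift {V W : Type*} {G : SimpleGraph V} {H : SimpleGraph W} (f : V → W)
    (hf : ∀ a b, G.Adj a b → H.Reachable (f a) (f b)) {u v : V} (h : G.Reachable u v) :
    H.Reachable (f u) (f v) := by
  rw [reachable_iff_reflTransGen] at h ⊢
  exact Relation.ReflTransGen.lift' f (fun a b hab => (reachable_iff_reflTransGen _ _).mp
    (hf a b hab)) _ _ h

end SimpleGraph

/-- The graph `fromEdgeSet E` lives on all of `V`, the vertices outside `S` being isolated, so that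
gluing trees never changes the vertex type. -/
structure IsTreeOn {V : Type*} (E : Set (Sym2 V)) (S : Set V) : Prop where
  mem_of_mem_edge : ∀ e ∈ E, ∀ v ∈ e, v ∈ S
  nonempty : S.Nonempty
  reachable : ∀ x ∈ S, ∀ y ∈ S, (fromEdgeSet E).Reachable x y
  isAcyclic : (fromEdgeSet E).IsAcyclic

namespace IsTreeOn

variable {V W : Type*} {E E₁ E₂ : Set (Sym2 V)} {S S₁ S₂ : Set V}

theorem singleton (v : V) : IsTreeOn (∅ : Set (Sym2 V)) {v} where
  mem_of_mem_edge _ he := he.elim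
  nonempty := singleton_nonempty v
  reachable x hx y hy := by rw [mem_singleton_iff.mp hx, mem_singleton_iff.mp hy]
  isAcyclic := by simp

theorem pair {a b : V} (hab : a ≠ b) : IsTreeOn {s(a, b)} {a, b} where
  mem_of_mem_edge e he v hv := by
    rw [mem_singleton_iff.mp he, Sym2.mem_iff] at hv
    exact hv
  nonempty := insert_nonempty a {b}
  reachable x hx y hy := by
    have hadj : (fromEdgeSet {s(a, b)}).Adj a b := by simp [hab]
    rcases hx with rfl | rfl <;> rcases hy with rfl | rfl
    exacts [.rfl, hadj.reachable, hadj.symm.reachable, .rfl]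
  isAcyclic := by
    simpa [edge] using isAcyclic_bot.sup_edge_of_not_reachable (reachable_bot.not.mpr hab)

theorem mem_of_adj (h : IsTreeOn E S) {x y : V} (hxy : (fromEdgeSet E).Adj x y) :
    x ∈ S ∧ y ∈ S :=
  ⟨h.mem_of_mem_edge _ hxy.1 x (Sym2.mem_mk_left x y),
    h.mem_of_mem_edge _ hxy.1 y (Sym2.mem_mk_right x y)⟩

theorem isBridge_union {c : V} (h₁ : IsTreeOn E₁ S₁) (h₂ : ∀ e ∈ E₂, ∀ v ∈ e, v ∈ S₂)
    (hS : S₁ ∩ S₂ = {c}) {x y : V} (hxy : (fromEdgeSet E₁).Adj x y) :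
    (fromEdgeSet (E₁ ∪ E₂)).IsBridge s(x, y) := by
  classical
  -- collapsing `S₂` onto the cut vertex `c` retracts `E₁ ∪ E₂` onto `E₁`
  let r : V → V := fun z => if z ∈ S₂ then c else z
  have hr : ∀ z ∈ S₁, r z = z := fun z hz => by
    by_cases hz₂ : z ∈ S₂
    · simpa [r, hz₂, eq_comm] using hS.subset ⟨hz, hz₂⟩
    · simp [r, hz₂]
  obtain ⟨hx, hy⟩ := h₁.mem_of_adj hxy
  rw [isBridge_iff]
  intro hreach
  refine isAcyclic_iff_forall_adj_isBridge.mp h₁.isAcyclic hxy ?_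
  have hreach₁ : ((fromEdgeSet E₁).deleteEdges {s(x, y)}).Reachable (r x) (r y) :=
    hreach.lift r fun p q hpq => ?_
  · rwa [hr x hx, hr y hy] at hreach₁
  simp only [deleteEdges_adj, fromEdgeSet_adj, mem_union, mem_singleton_iff] at hpq
  obtain ⟨⟨hpq₁ | hpq₂, hne⟩, hpq⟩ := hpq
  · obtain ⟨hp, hq⟩ := h₁.mem_of_adj ⟨hpq₁, hne⟩
    rw [hr p hp, hr q hq]
    exact Adj.reachable (by simp [hpq₁, hne, hpq])
  · simp [r, h₂ _ hpq₂ p (Sym2.mem_mk_left p q), h₂ _ hpq₂ q (Sym2.mem_mk_right p q)]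

theorem union {c : V} (h₁ : IsTreeOn E₁ S₁) (h₂ : IsTreeOn E₂ S₂) (hS : S₁ ∩ S₂ = {c}) :
    IsTreeOn (E₁ ∪ E₂) (S₁ ∪ S₂) where
  mem_of_mem_edge e he v hv := he.elim (fun he => .inl (h₁.mem_of_mem_edge e he v hv))
    (fun he => .inr (h₂.mem_of_mem_edge e he v hv))
  nonempty := h₁.nonempty.mono subset_union_left
  reachable := by
    have hc : c ∈ S₁ ∩ S₂ := hS.symm ▸ mem_singleton c
    have hreach : ∀ x ∈ S₁ ∪ S₂, (fromEdgeSet (E₁ ∪ E₂)).Reachable x c := by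
      rintro x (hx | hx)
      · exact (h₁.reachable x hx c hc.1).mono (fromEdgeSet_mono subset_union_left)
      · exact (h₂.reachable x hx c hc.2).mono (fromEdgeSet_mono subset_union_right)
    exact fun x hx y hy => (hreach x hx).trans (hreach y hy).symm
  isAcyclic := by
    refine isAcyclic_iff_forall_adj_isBridge.mpr fun x y hxy => ?_
    obtain ⟨hxy₁ | hxy₂, hne⟩ := hxy
    · exact h₁.isBridge_union h₂.mem_of_mem_edge hS ⟨hxy₁, hne⟩
    · rw [union_comm]
      exact h₂.isBridge_union h₁.mem_of_mem_edge (by rw [inter_comm, hS]) ⟨hxy₂, hne⟩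

theorem image {φ : V → W} (hφ : Bijective φ) (h : IsTreeOn E S) :
    IsTreeOn (Sym2.map φ '' E) (φ '' S) where
  mem_of_mem_edge := by
    rintro _ ⟨e, he, rfl⟩ _ hv
    obtain ⟨w, hw, rfl⟩ := Sym2.mem_map.mp hv
    exact mem_image_of_mem φ (h.mem_of_mem_edge e he w hw)
  nonempty := h.nonempty.image φ
  reachable := by
    rintro _ ⟨x, hx, rfl⟩ _ ⟨y, hy, rfl⟩
    refine (h.reachable x hx y hy).lift φ fun a b hab => Adj.reachable ?_
    exact ⟨⟨s(a, b), hab.1, rfl⟩, hφ.injective.ne hab.2⟩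
  isAcyclic := by
    let ψ := (Equiv.ofBijective φ hφ).symm
    refine h.isAcyclic.comap ⟨ψ, fun {p q} hpq => ?_⟩ ψ.injective
    refine (fromEdgeSet_adj _).mpr ⟨?_, ψ.injective.ne hpq.2⟩
    obtain ⟨e, he, hpq⟩ := hpq.1
    have : e = Sym2.map ψ s(p, q) := by
      rw [← hpq, Sym2.map_map]
      simp [ψ]
    rwa [this, Sym2.map_mk] at he

theorem path {f : ℤ → V} (hf : Injective f) {a b : ℤ} (hab : a ≤ b) :
    IsTreeOn {e | ∃ x, a ≤ x ∧ x < b ∧ e = s(f x, f (x + 1))} (f '' Icc a b) := by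
  induction b, hab using Int.leInduction with
  | base =>
    have hE : {e | ∃ x, a ≤ x ∧ x < a ∧ e = s(f x, f (x + 1))} = ∅ :=
      eq_empty_of_forall_notMem fun e ⟨x, hax, hxa, _⟩ => (hax.not_gt hxa).elim
    rw [hE, Icc_self, image_singleton]
    exact singleton (f a)
  | succ b hab ih =>
    have hE : {e | ∃ x, a ≤ x ∧ x < b + 1 ∧ e = s(f x, f (x + 1))} =
        {e | ∃ x, a ≤ x ∧ x < b ∧ e = s(f x, f (x + 1))} ∪ {s(f b, f (b + 1))} := by
      ext e
      simp only [mem_union, mem_ofPred_eq, mem_singleton_iff]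
      constructor
      · rintro ⟨x, hax, hxb, rfl⟩
        rcases (Int.lt_add_one_iff.mp hxb).lt_or_eq with hxb | rfl
        exacts [.inl ⟨x, hax, hxb, rfl⟩, .inr rfl]
      · rintro (⟨x, hax, hxb, rfl⟩ | rfl)
        exacts [⟨x, hax, by omega, rfl⟩, ⟨b, hab, by omega, rfl⟩]
    have hS : Icc a (b + 1) = Icc a b ∪ {b, b + 1} := by ext; simp; omega
    have hI : Icc a b ∩ {b, b + 1} = {b} := by ext; simp; omega
    rw [hE, hS, image_union, image_pair]
    refine ih.union (pair (hf.ne (by omega))) (c := f b) ?_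
    rw [← image_pair, ← image_inter hf, hI, image_singleton]

theorem isTree_fromEdgeSet_preimage (h : IsTreeOn E S) :
    (fromEdgeSet (Sym2.map ((↑) : S → V) ⁻¹' E)).IsTree where
  connected := by
    classical
    obtain ⟨v₀, hv₀⟩ := h.nonempty
    have : Nonempty S := ⟨⟨v₀, hv₀⟩⟩
    refine ⟨fun x y => ?_⟩
    let r : V → S := fun z => if hz : z ∈ S then ⟨z, hz⟩ else ⟨v₀, hv₀⟩
    have hr : ∀ z : S, r z = z := fun z => by simp [r, z.2]
    rw [← hr x, ← hr y]
    refine (h.reachable x x.2 y y.2).lift r fun p q hpq => Adj.reachable ?_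
    obtain ⟨hp, hq⟩ := h.mem_of_adj hpq
    simpa [r, hp, hq] using hpq
  isAcyclic := h.isAcyclic.comap ⟨Subtype.val, fun hpq => by simpa [Subtype.val_inj] using hpq⟩
    Subtype.val_injective

end IsTreeOn

def square (t : ℤ × ℤ) (m : ℤ) : Set (ℤ × ℤ) :=
  {p | t.1 ≤ p.1 ∧ p.1 < t.1 + m ∧ t.2 ≤ p.2 ∧ p.2 < t.2 + m}

theorem fragVerts_eq_square (n : ℕ) : fragVerts n = square 0 (2 ^ n - 1) := by
  ext; simp [fragVerts, square]

theorem trP_bijective (t : ℤ × ℤ) : Bijective (trP t) := (Equiv.addRight t).bijective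

theorem reflP_involutive (m : ℤ) : Involutive (reflP m) := fun p => by simp [reflP]

theorem image_trP_square (t : ℤ × ℤ) (m : ℤ) : trP t '' square 0 m = square t m := by
  ext ⟨x, y⟩
  constructor
  · rintro ⟨⟨a, b⟩, hab, he⟩
    simp only [trP, Prod.mk.injEq] at he
    simp only [square, mem_ofPred_eq, Prod.fst_zero, Prod.snd_zero] at hab ⊢
    omega
  · intro h
    refine ⟨(x - t.1, y - t.2), ?_, by simp [trP]⟩
    simp only [square, mem_ofPred_eq, Prod.fst_zero, Prod.snd_zero] at h ⊢
    omega

theorem image_reflP_square (m : ℤ) : reflP m '' square 0 m = square 0 m := by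
  have hmaps : MapsTo (reflP m) (square 0 m) (square 0 m) := by
    rintro ⟨x, y⟩ h
    simp only [square, reflP, mem_ofPred_eq, Prod.fst_zero, Prod.snd_zero, zero_add] at h ⊢
    omega
  exact hmaps.image_subset.antisymm fun p hp => ⟨reflP m p, hmaps hp, reflP_involutive m p⟩

theorem isTreeOn_cross {m : ℤ} (hm : 0 ≤ m) :
    IsTreeOn ({e | ∃ x : ℤ, 0 ≤ x ∧ x < 2 * m ∧ e = s((x, m), (x + 1, m))} ∪
      {e | ∃ y : ℤ, 0 ≤ y ∧ y < 2 * m ∧ e = s((m, y), (m, y + 1))})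
      ((fun x => (x, m)) '' Icc 0 (2 * m) ∪ (fun y => (m, y)) '' Icc 0 (2 * m)) :=
  (IsTreeOn.path (f := fun x => (x, m)) (fun x y h => congrArg Prod.fst h) (by omega)).union
    (IsTreeOn.path (f := fun y => (m, y)) (fun x y h => congrArg Prod.snd h) (by omega))
    (c := (m, m)) (by ext ⟨x, y⟩; simp; omega)

theorem isTreeOn_fragEdges_add_two (n : ℕ)
    (ih : IsTreeOn (fragEdges (n + 1)) (fragVerts (n + 1))) :
    IsTreeOn (fragEdges (n + 2)) (fragVerts (n + 2)) := by
  have hm : (1 : ℤ) ≤ 2 ^ (n + 1) - 1 := by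
    have : (2 : ℤ) ≤ 2 ^ (n + 1) := le_self_pow₀ one_le_two (by omega)
    omega
  rw [fragVerts_eq_square] at ih ⊢
  rw [show (2 : ℤ) ^ (n + 2) - 1 = 2 * (2 ^ (n + 1) - 1) + 1 by ring, fragEdges]
  generalize (2 : ℤ) ^ (n + 1) - 1 = m at hm ih ⊢
  generalize fragEdges (n + 1) = E at ih ⊢
  have hshift (t : ℤ × ℤ) : IsTreeOn (Sym2.map (trP t) '' E) (square t m) :=
    image_trP_square t m ▸ ih.image (trP_bijective t)
  have hflip (t : ℤ × ℤ) :
      IsTreeOn (Sym2.map (fun p => trP t (reflP m p)) '' E) (square t m) := by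
    rw [← image_trP_square, ← image_reflP_square, image_image]
    exact ih.image ((trP_bijective t).comp (reflP_involutive m).bijective)
  have hlink (x y : ℤ) (hy : y ≠ m) : IsTreeOn {s((x, y), (x, m))} {(x, y), (x, m)} :=
    IsTreeOn.pair (by simpa using hy)
  -- goals: the edge sets (equal up to order), the vertex sets, the one-point intersections
  convert ((((((((isTreeOn_cross (by omega : 0 ≤ m)).union
    (hlink (m - 1) (m - 1) (by omega)) (c := (m - 1, m)) ?_).union
    (hshift (0, 0)) (c := (m - 1, m - 1)) ?_).union
    (hlink (m + 1) (m - 1) (by omega)) (c := (m + 1, m)) ?_).union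
    (hshift (m + 1, 0)) (c := (m + 1, m - 1)) ?_).union
    (hlink (m - 1) (m + 1) (by omega)) (c := (m - 1, m)) ?_).union
    (hflip (0, m + 1)) (c := (m - 1, m + 1)) ?_).union
    (hlink (m + 1) (m + 1) (by omega)) (c := (m + 1, m)) ?_).union
    (hflip (m + 1, m + 1)) (c := (m + 1, m + 1)) ?_ using 1
  · simp only [insert_eq]
    ac_rfl
  all_goals ext ⟨x, y⟩; simp [square]; omega

theorem isTreeOn_fragEdges (n : ℕ) : IsTreeOn (fragEdges (n + 1)) (fragVerts (n + 1)) := by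
  induction n with
  | zero =>
    have : fragVerts 1 = {0} := by ext ⟨x, y⟩; simp [fragVerts]; omega
    rw [this]
    exact .singleton 0
  | succ n ih => exact isTreeOn_fragEdges_add_two n ih

theorem card_fragVerts (n : ℕ) : Nat.card (fragVerts n) = (2 ^ n - 1) ^ 2 := by
  have hprod : fragVerts n = Ico 0 (2 ^ n - 1) ×ˢ Ico 0 (2 ^ n - 1) := by
    ext; simp [fragVerts, and_assoc]
  have hk : ((2 : ℤ) ^ n - 1 - 0).toNat = 2 ^ n - 1 := by
    have : ((2 ^ n : ℕ) : ℤ) = 2 ^ n := by push_cast; rfl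
    omega
  rw [hprod, Nat.card_congr (Equiv.Set.prod _ _), Nat.card_prod, Nat.card_eq_fintype_card,
    Fintype.card_Ico, Int.card_Ico, hk, sq]

/-- For every `n ≥ 1`, the `n`-th fragment is a tree (connected and acyclic)
spanning all `(2^n − 1)²` vertices of the `(2^n−1) × (2^n−1)` grid square. -/
theorem fragment_isTree (n : ℕ) (hn : 1 ≤ n) :
    (SimpleGraph.fromEdgeSet
        (Sym2.map (fun p : fragVerts n => (p : ℤ × ℤ)) ⁻¹' fragEdges n)).IsTree
    ∧ Nat.card (fragVerts n) = (2 ^ n - 1) ^ 2 := by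
  obtain ⟨k, rfl⟩ := Nat.exists_eq_add_of_le' hn
  exact ⟨(isTreeOn_fragEdges k).isTree_fromEdgeSet_preimage, card_fragVerts (k + 1)⟩
end

section
/- Let (v_n) be a sequence of stationary integer-valued random vector fields on ℤ² such that (a) ℙ((div v_n)_x = 1) → 1 as n → ∞ for every vertex x, and (b) for every edge y, sup_n ℙ(|(v_n)_y| > C) → 0 as C → ∞. Then there exists a stationary random vector field v on ℤ² with ℙ((div v)_x = 1) = 1 for every vertex x, and ℙ(|v_y| > C) ≤ sup_n ℙ(|(v_n)_y| > C) for every C and every edge y. -/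
open MeasureTheory Filter Topology

/-- Shift (translate) an integer vector field on `ℤ²` by `t`; `w p b` is the
value on the edge going out of `p` rightward (`b = true`) or upward
(`b = false`). -/
def shiftF (t : ℤ × ℤ) (w : ℤ × ℤ → Bool → ℤ) : ℤ × ℤ → Bool → ℤ :=
  fun p b => w (p.1 + t.1, p.2 + t.2) b

/-- The divergence at a vertex `p` of an integer vector field on `ℤ²`:
the sum of the field over the four edges oriented out of `p`. -/
def divB (w : ℤ × ℤ → Bool → ℤ) (p : ℤ × ℤ) : ℤ :=
  w p true + w p false - w (p.1 - 1, p.2) true - w (p.1, p.2 - 1) false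

open TopologicalSpace Set OnePoint

/-!
Push the laws of the `v n` forward to the compact metrizable space of `ℤ̄`-valued fields, where
`ℤ̄ = ℤ ∪ {∞}` is the one-point compactification. By weak compactness they converge, along a
filter finer than `atTop`, to some law `ν`, which is shift-invariant since the shifts act
continuously. Tightness (b) makes `ν` charge no configuration with an infinite entry, so every
event depending continuously on finitely many entries has `ν`-null frontier; the portmanteau
theorem then transfers (a) and the tail bounds to `ν`, and hence to its image `μ'` under the map
sending `∞` back to `0`.
-/

instance {X : Type*} [Countable X] : Countable (OnePoint X) :=
  inferInstanceAs (Countable (Option X))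

instance : MetrizableSpace (OnePoint ℤ) :=
  Equiv.intEquivNat.toHomeomorphOfDiscrete.onePointCongr.isEmbedding.metrizableSpace

instance : MeasurableSpace (OnePoint ℤ) := borel _

instance : BorelSpace (OnePoint ℤ) := ⟨rfl⟩

theorem OnePoint.continuousAt_coe_of_discreteTopology {X Y : Type*} [TopologicalSpace X]
    [DiscreteTopology X] [TopologicalSpace Y] (f : OnePoint X → Y) (x : X) :
    ContinuousAt f x :=
  OnePoint.continuousAt_coe.2 continuous_of_discreteTopology.continuousAt

theorem OnePoint.isClopen_image_coe_of_finite {X : Type*} [TopologicalSpace X]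
    [DiscreteTopology X] {s : Set X} (hs : s.Finite) :
    IsClopen ((↑) '' s : Set (OnePoint X)) :=
  ⟨(hs.image _).isClosed, OnePoint.isOpen_image_coe.2 (isOpen_discrete s)⟩

theorem frontier_preimage_subset_setOf_not_continuousAt {X Y : Type*} [TopologicalSpace X]
    [TopologicalSpace Y] [DiscreteTopology Y] (g : X → Y) (B : Set Y) :
    frontier (g ⁻¹' B) ⊆ {x | ¬ContinuousAt g x} := by
  intro x hx hg
  by_cases hxB : g x ∈ B
  · exact hx.2 (mem_interior_iff_mem_nhds.2
      (hg.preimage_mem_nhds ((isOpen_discrete B).mem_nhds hxB)))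
  · obtain ⟨y, hyB, hy⟩ := mem_closure_iff_nhds.1 hx.1 _
      (hg.preimage_mem_nhds ((isOpen_discrete Bᶜ).mem_nhds hxB))
    exact hyB hy

theorem exists_le_tendsto_of_compactSpace {α X : Type*} [TopologicalSpace X] [CompactSpace X]
    (u : α → X) (l : Filter α) [l.NeBot] :
    ∃ F ≤ l, F.NeBot ∧ ∃ x, Tendsto u F (𝓝 x) := by
  obtain ⟨x, -, hx⟩ := isCompact_univ.ultrafilter_le_nhds ((Ultrafilter.of l).map u)
    (by simp)
  exact ⟨Ultrafilter.of l, Ultrafilter.of_le l, inferInstance, x, hx⟩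

section Compactification

variable {ι κ : Type*}

def compactify (w : ι → κ → ℤ) : ι → κ → OnePoint ℤ := fun i j => w i j

/-- The value `0` at `∞` is arbitrary: the limit law will not charge `∞`. -/
def decompactify (z : ι → κ → OnePoint ℤ) : ι → κ → ℤ := fun i j => (z i j).elim 0 id

theorem decompactify_comp_compactify :
    (decompactify ∘ compactify : (ι → κ → ℤ) → ι → κ → ℤ) = id := rfl

theorem continuous_compactify :
    Continuous (compactify : (ι → κ → ℤ) → ι → κ → OnePoint ℤ) := by
  unfold compactify
  fun_prop

theorem measurable_decompactify [Countable ι] [Countable κ] :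
    Measurable (decompactify : (ι → κ → OnePoint ℤ) → ι → κ → ℤ) :=
  measurable_pi_lambda _ fun i => measurable_pi_lambda _ fun j =>
    (measurable_of_countable fun a : OnePoint ℤ => a.elim 0 id).comp
      (continuous_apply_apply i j).measurable

theorem continuousAt_decompactify_apply {z : ι → κ → OnePoint ℤ} {i : ι} {j : κ}
    (h : z i j ≠ ∞) : ContinuousAt (fun z => decompactify z i j) z := by
  obtain ⟨k, hk⟩ := OnePoint.ne_infty_iff_exists.1 h
  change ContinuousAt ((fun a : OnePoint ℤ => a.elim 0 id) ∘ fun z => z i j) z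
  exact (OnePoint.continuousAt_coe_of_discreteTopology _ k).comp_of_eq
    (continuous_apply_apply i j).continuousAt hk.symm

def boundedAt (i : ι) (j : κ) (C : ℕ) : Set (ι → κ → OnePoint ℤ) :=
  {z | z i j ∈ ((↑) '' Icc (-(C : ℤ)) C : Set (OnePoint ℤ))}

theorem isClopen_boundedAt (i : ι) (j : κ) (C : ℕ) : IsClopen (boundedAt i j C) :=
  (OnePoint.isClopen_image_coe_of_finite (finite_Icc _ _)).preimage
    (continuous_apply_apply i j)

theorem compactify_preimage_boundedAt_compl (i : ι) (j : κ) (C : ℕ) :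
    compactify ⁻¹' (boundedAt i j C)ᶜ = {w | (C : ℤ) < |w i j|} := by
  ext w
  simp only [boundedAt, compactify, mem_preimage, mem_compl_iff, mem_ofPred_eq,
    OnePoint.coe_injective.mem_set_image, mem_Icc, ← abs_le, not_le]

theorem setOf_apply_eq_infty_subset_boundedAt_compl (i : ι) (j : κ) (C : ℕ) :
    {z : ι → κ → OnePoint ℤ | z i j = ∞} ⊆ (boundedAt i j C)ᶜ := by
  intro z (hz : z i j = ∞)
  simp [boundedAt, hz]

end Compactification

section Limit

variable {ι κ : Type*} [Countable ι] [Countable κ]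

noncomputable def compactLaw (P : Measure (ι → κ → ℤ)) [IsProbabilityMeasure P] :
    ProbabilityMeasure (ι → κ → OnePoint ℤ) :=
  ⟨P.map compactify,
    Measure.isProbabilityMeasure_map continuous_compactify.measurable.aemeasurable⟩

theorem compactLaw_apply (P : Measure (ι → κ → ℤ)) [IsProbabilityMeasure P]
    {E : Set (ι → κ → OnePoint ℤ)} (hE : MeasurableSet E) :
    (compactLaw P : Measure _) E = P (compactify ⁻¹' E) :=
  Measure.map_apply continuous_compactify.measurable hE

variable {P : ℕ → Measure (ι → κ → ℤ)} [∀ n, IsProbabilityMeasure (P n)] {F : Filter ℕ}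
  {ν : ProbabilityMeasure (ι → κ → OnePoint ℤ)}

theorem measure_boundedAt_compl_le [F.NeBot]
    (hν : Tendsto (fun n => compactLaw (P n)) F (𝓝 ν)) (i : ι) (j : κ) (C : ℕ) :
    (ν : Measure _) (boundedAt i j C)ᶜ ≤ ⨆ n, P n {w | (C : ℤ) < |w i j|} := by
  have hE := (isClopen_boundedAt i j C).compl
  refine le_of_tendsto' (ProbabilityMeasure.tendsto_measure_of_null_frontier_of_tendsto' hν
    (by rw [hE.frontier_eq, measure_empty])) fun n => ?_
  rw [compactLaw_apply _ hE.isOpen.measurableSet, compactify_preimage_boundedAt_compl]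
  exact le_iSup (fun n => P n {w | (C : ℤ) < |w i j|}) n

theorem ae_ne_infty_of_tight [F.NeBot] (hν : Tendsto (fun n => compactLaw (P n)) F (𝓝 ν))
    (htight : ∀ i j, Tendsto (fun C : ℕ => ⨆ n, P n {w | (C : ℤ) < |w i j|}) atTop (𝓝 0)) :
    ∀ᵐ z ∂(ν : Measure (ι → κ → OnePoint ℤ)), ∀ i j, z i j ≠ ∞ := by
  refine ae_all_iff.2 fun i => ae_all_iff.2 fun j => ?_
  refine measure_eq_zero_iff_ae_notMem.1 (nonpos_iff_eq_zero.1 (ge_of_tendsto' (htight i j)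
    fun C => ?_))
  exact (measure_mono (setOf_apply_eq_infty_subset_boundedAt_compl i j C)).trans
    (measure_boundedAt_compl_le hν i j C)

theorem tendsto_measure_preimage_of_ae_continuousAt
    (hν : Tendsto (fun n => compactLaw (P n)) F (𝓝 ν)) {Y : Type*} [TopologicalSpace Y]
    [DiscreteTopology Y] [MeasurableSpace Y] [DiscreteMeasurableSpace Y]
    {f : (ι → κ → ℤ) → Y} (hf : Measurable f)
    (hcont : ∀ᵐ z ∂(ν : Measure _), ContinuousAt (f ∘ decompactify) z) (B : Set Y) :
    Tendsto (fun n => P n (f ⁻¹' B)) F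
      (𝓝 ((ν : Measure _).map decompactify (f ⁻¹' B))) := by
  have hB : MeasurableSet (f ⁻¹' B) := hf (.of_discrete)
  have hfr : (ν : Measure _) (frontier (decompactify ⁻¹' (f ⁻¹' B))) = 0 :=
    measure_mono_null (frontier_preimage_subset_setOf_not_continuousAt (f ∘ decompactify) B)
      (ae_iff.1 hcont)
  rw [Measure.map_apply measurable_decompactify hB]
  convert ProbabilityMeasure.tendsto_measure_of_null_frontier_of_tendsto' hν hfr using 2 with n
  rw [compactLaw_apply _ (measurable_decompactify hB), ← preimage_comp,
    decompactify_comp_compactify, preimage_id]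

theorem map_precomp_map_decompactify_eq [F.NeBot]
    (hν : Tendsto (fun n => compactLaw (P n)) F (𝓝 ν)) (τ : ι → ι)
    (hP : ∀ n, (P n).map (fun w i => w (τ i)) = P n) :
    ((ν : Measure (ι → κ → OnePoint ℤ)).map decompactify).map (fun w i => w (τ i)) =
      (ν : Measure _).map decompactify := by
  let σ (z : ι → κ → OnePoint ℤ) : ι → κ → OnePoint ℤ := fun i => z (τ i)
  have hσ : Continuous σ := by fun_prop
  let Φ (Q : ProbabilityMeasure (ι → κ → OnePoint ℤ)) := Q.map hσ.measurable.aemeasurable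
  have hΦ : ∀ n, Φ (compactLaw (P n)) = compactLaw (P n) := fun n => by
    refine ProbabilityMeasure.toMeasure_injective ?_
    change ((P n).map compactify).map σ = (P n).map compactify
    rw [Measure.map_map hσ.measurable continuous_compactify.measurable]
    change (P n).map (compactify ∘ fun w i => w (τ i)) = _
    rw [← Measure.map_map continuous_compactify.measurable (by fun_prop), hP n]
  have hΦν : Tendsto (fun n => compactLaw (P n)) F (𝓝 (Φ ν)) := by
    have := ((ProbabilityMeasure.continuous_map hσ).tendsto ν).comp hν
    change Tendsto (fun n => Φ (compactLaw (P n))) F (𝓝 (Φ ν)) at this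
    simpa only [hΦ] using this
  have hσν : (ν : Measure _).map σ = ν :=
    congrArg ProbabilityMeasure.toMeasure (tendsto_nhds_unique hΦν hν)
  rw [Measure.map_map (by fun_prop) measurable_decompactify]
  change (ν : Measure _).map (decompactify ∘ σ) = _
  rw [← Measure.map_map measurable_decompactify hσ.measurable, hσν]

end Limit

theorem measurable_shiftF (t : ℤ × ℤ) : Measurable (shiftF t) := by
  unfold shiftF
  fun_prop

theorem measurable_divB (x : ℤ × ℤ) : Measurable fun w => divB w x := by
  unfold divB
  fun_prop

theorem continuousAt_divB_decompactify {z : ℤ × ℤ → Bool → OnePoint ℤ}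
    (hz : ∀ p b, z p b ≠ ∞) (x : ℤ × ℤ) :
    ContinuousAt (fun z => divB (decompactify z) x) z :=
  have h p b := continuousAt_decompactify_apply (hz p b)
  (((h x true).add (h x false)).sub (h _ true)).sub (h _ false)

theorem exists_stationary_limit_law (P : ℕ → Measure (ℤ × ℤ → Bool → ℤ))
    [∀ n, IsProbabilityMeasure (P n)] (hstat : ∀ n t, (P n).map (shiftF t) = P n)
    (hdiv : ∀ x, Tendsto (fun n => P n {w | divB w x = 1}) atTop (𝓝 1))
    (htight : ∀ y : (ℤ × ℤ) × Bool,
      Tendsto (fun C : ℕ => ⨆ n, P n {w | (C : ℤ) < |w y.1 y.2|}) atTop (𝓝 0)) :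
    ∃ μ' : Measure (ℤ × ℤ → Bool → ℤ), IsProbabilityMeasure μ' ∧
      (∀ t, μ'.map (shiftF t) = μ') ∧ (∀ x, μ' {w | divB w x = 1} = 1) ∧
      ∀ (C : ℕ) (y : (ℤ × ℤ) × Bool),
        μ' {w | (C : ℤ) < |w y.1 y.2|} ≤ ⨆ n, P n {w | (C : ℤ) < |w y.1 y.2|} := by
  obtain ⟨F, hFle, hF, ν, hν⟩ :=
    exists_le_tendsto_of_compactSpace (fun n => compactLaw (P n)) atTop
  have hfin := ae_ne_infty_of_tight hν fun p b => htight (p, b)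
  refine ⟨(ν : Measure _).map decompactify,
    Measure.isProbabilityMeasure_map measurable_decompactify.aemeasurable, fun t => ?_,
    fun x => ?_, fun C y => ?_⟩
  · exact map_precomp_map_decompactify_eq hν (fun p => (p.1 + t.1, p.2 + t.2)) (hstat · t)
  · refine tendsto_nhds_unique ?_ ((hdiv x).mono_left hFle)
    exact tendsto_measure_preimage_of_ae_continuousAt hν (measurable_divB x)
      (hfin.mono fun z hz => continuousAt_divB_decompactify hz x) {1}
  · have hlim := tendsto_measure_preimage_of_ae_continuousAt hν (f := fun w => w y.1 y.2)
      (by fun_prop) (hfin.mono fun z hz => continuousAt_decompactify_apply (hz y.1 y.2))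
      {k : ℤ | (C : ℤ) < |k|}
    exact le_of_tendsto' hlim fun n => le_iSup (fun n => P n {w | (C : ℤ) < |w y.1 y.2|}) n

/-- Lemma 1: if there exist stationary random integer vector fields
`v n : Ω n → (ℤ² → Bool → ℤ)` such that
(a) `ℙ((div (v n))_x = 1) → 1` as `n → ∞` for every vertex `x`, and
(b) `sup_n ℙ(|(v n)_y| > C) → 0` as `C → ∞` for every edge `y`,
then there exists a stationary random vector field (described by its
shift-invariant law `μ'`) such that
(A) its divergence equals `1` at every vertex with probability `1`, and
(B) `ℙ(|v_y| > C) ≤ sup_n ℙ(|(v n)_y| > C)` for every `C` and every edge `y`. -/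
theorem limit_of_stationary_fields
    (Ω : ℕ → Type) [∀ n, MeasurableSpace (Ω n)]
    (μ : ∀ n, Measure (Ω n)) [∀ n, IsProbabilityMeasure (μ n)]
    (v : ∀ n, Ω n → (ℤ × ℤ → Bool → ℤ)) (hmeas : ∀ n, Measurable (v n))
    (hstat : ∀ n (t : ℤ × ℤ),
      Measure.map (fun ω => shiftF t (v n ω)) (μ n) = Measure.map (v n) (μ n))
    (ha : ∀ x : ℤ × ℤ,
      Tendsto (fun n => μ n {ω | divB (v n ω) x = 1}) atTop (𝓝 1))
    (hb : ∀ y : (ℤ × ℤ) × Bool,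
      Tendsto (fun C : ℕ => ⨆ n, μ n {ω | (C : ℤ) < |v n ω y.1 y.2|})
        atTop (𝓝 0)) :
    ∃ μ' : Measure (ℤ × ℤ → Bool → ℤ), IsProbabilityMeasure μ' ∧
      (∀ t : ℤ × ℤ, Measure.map (shiftF t) μ' = μ') ∧
      (∀ x : ℤ × ℤ, μ' {w | divB w x = 1} = 1) ∧
      (∀ (C : ℕ) (y : (ℤ × ℤ) × Bool),
        μ' {w | (C : ℤ) < |w y.1 y.2|}
          ≤ ⨆ n, μ n {ω | (C : ℤ) < |v n ω y.1 y.2|}) := by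
  have hlaw : ∀ n {A : Set (ℤ × ℤ → Bool → ℤ)}, MeasurableSet A →
      (μ n).map (v n) A = μ n (v n ⁻¹' A) := fun n _ hA => Measure.map_apply (hmeas n) hA
  have hdiv_meas : ∀ x, MeasurableSet {w : ℤ × ℤ → Bool → ℤ | divB w x = 1} :=
    fun x => measurable_divB x (measurableSet_singleton 1)
  have htail_meas : ∀ (C : ℕ) (y : (ℤ × ℤ) × Bool),
      MeasurableSet {w : ℤ × ℤ → Bool → ℤ | (C : ℤ) < |w y.1 y.2|} :=
    fun C y => measurableSet_lt measurable_const (by fun_prop)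
  have := fun n => Measure.isProbabilityMeasure_map (μ := μ n) (hmeas n).aemeasurable
  obtain ⟨μ', hμ', hstat', hdiv', htail'⟩ :=
    exists_stationary_limit_law (fun n => (μ n).map (v n))
      (fun n t => by rw [Measure.map_map (measurable_shiftF t) (hmeas n)]; exact hstat n t)
      (fun x => by simpa only [hlaw _ (hdiv_meas x), preimage_ofPred_eq] using ha x)
      (fun y => by simpa only [hlaw _ (htail_meas _ y), preimage_ofPred_eq] using hb y)
  refine ⟨μ', hμ', hstat', hdiv', fun C y => ?_⟩
  simpa only [hlaw _ (htail_meas C y), preimage_ofPred_eq] using htail' C y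
end
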